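/- In the one-dimensional facility assignment game with fair cost sharing, let s be a pure Nash equilibrium and let a, b, c be three agents with x_a < x_b < x_c. If s_a = s_c, then s_b = s_a = s_c (agents choosing the same facility in a PNE form a consecutive block). -/
import Mathlib


/-- Number of agents assigned to facility `j` under assignment `s`. -/
def facCount {n m : ℕ} (s : Fin n → Fin m) (j : Fin m) : ℕ :=
  (Finset.univ.filter fun i => s i = j).card

/-- Cost of an agent with true position `y` under assignment `s`, being agent `i`. -/
noncomputable def agentCost {n m : ℕ} (ℓ bc : Fin m → ℝ) (y : ℝ)
    (s : Fin n → Fin m) (i : Fin n) : ℝ :=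
  |y - ℓ (s i)| + bc (s i) / (facCount s (s i) : ℝ)

/-- A pure Nash equilibrium. -/
def isPNE {n m : ℕ} (x : Fin n → ℝ) (ℓ bc : Fin m → ℝ) (s : Fin n → Fin m) : Prop :=
  ∀ (i : Fin n) (j' : Fin m),
    agentCost ℓ bc (x i) s i ≤ agentCost ℓ bc (x i) (Function.update s i j') i

lemma facCount_update_ne {n m : ℕ} (s : Fin n → Fin m) (i : Fin n) (k : Fin m)
    (h : s i ≠ k) : facCount (Function.update s i k) k = facCount s k + 1 := by
  classical
  unfold facCount
  have hset : (Finset.univ.filter fun i' => Function.update s i k i' = k)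
      = insert i (Finset.univ.filter fun i' => s i' = k) := by
    ext i'
    by_cases hi : i' = i <;> simp [Function.update_apply, hi, h]
  rw [hset, Finset.card_insert_of_notMem (by simp [h])]

lemma facCount_pos {n m : ℕ} (s : Fin n → Fin m) (i : Fin n) (j : Fin m)
    (h : s i = j) : 0 < facCount s j :=
  Finset.card_pos.mpr ⟨i, by simp [facCount, h]⟩

/-- In a PNE, the agents choosing a given facility form a consecutive block. -/
theorem pne_consecutive {n m : ℕ} (x : Fin n → ℝ) (ℓ bc : Fin m → ℝ)
    (hb : ∀ j, 0 < bc j) (s : Fin n → Fin m)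
    (hPNE : isPNE x ℓ bc s) (a b c : Fin n)
    (hab : x a < x b) (hbc : x b < x c) (hac : s a = s c) :
    s b = s a ∧ s b = s c := by
  classical
  by_cases hba : s b = s a
  · exact ⟨hba, hba.trans hac⟩
  exfalso
  set j := s a with hj
  set k := s b with hk
  have hbj : s b ≠ j := hba
  have hak : s a ≠ k := fun h => hba h.symm
  have hck : s c ≠ k := by rw [← hac]; exact hak
  -- counts
  have hNj : 0 < facCount s j := facCount_pos s a j rfl
  have hNk : 0 < facCount s k := facCount_pos s b k rfl
  have hNjR : (1 : ℝ) ≤ (facCount s j : ℝ) := by exact_mod_cast hNj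
  have hNkR : (1 : ℝ) ≤ (facCount s k : ℝ) := by exact_mod_cast hNk
  -- b's deviation to j
  have h2 := hPNE b j
  rw [agentCost, agentCost, Function.update_self, facCount_update_ne s b j hbj] at h2
  push_cast at h2
  -- strict cost-share inequalities
  have hcj : bc j / ((facCount s j : ℝ) + 1) < bc j / (facCount s j : ℝ) :=
    div_lt_div_of_pos_left (hb j) (by linarith) (by linarith)
  have hck2 : bc k / ((facCount s k : ℝ) + 1) < bc k / (facCount s k : ℝ) :=
    div_lt_div_of_pos_left (hb k) (by linarith) (by linarith)
  rcases le_or_gt (x b) (ℓ j) with hcase | hcase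
  · -- facility j is to the right of x b: use agent a's deviation to k
    have h1 := hPNE a k
    rw [agentCost, agentCost, Function.update_self, facCount_update_ne s a k hak] at h1
    push_cast at h1
    rw [show s a = j from rfl] at h1
    have hAa : |x a - ℓ j| = ℓ j - x a := by
      rw [abs_of_nonpos (by linarith)]; ring
    have hAb : |x b - ℓ j| = ℓ j - x b := by
      rw [abs_of_nonpos (by linarith)]; ring
    have htri : |x a - ℓ k| ≤ |x a - x b| + |x b - ℓ k| := abs_sub_le _ _ _
    have habs : |x a - x b| = x b - x a := by
      rw [abs_of_nonpos (by linarith)]; ring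
    rw [hAa] at h1
    rw [hAb] at h2
    rw [habs] at htri
    linarith
  · -- facility j is to the left of x b: use agent c's deviation to k
    have h1 := hPNE c k
    rw [agentCost, agentCost, Function.update_self, facCount_update_ne s c k hck] at h1
    push_cast at h1
    rw [show s c = j from hac.symm] at h1
    have hAc : |x c - ℓ j| = x c - ℓ j := by
      rw [abs_of_nonneg (by linarith)]
    have hAb : |x b - ℓ j| = x b - ℓ j := by
      rw [abs_of_nonneg (by linarith)]
    have htri : |x c - ℓ k| ≤ |x c - x b| + |x b - ℓ k| := abs_sub_le _ _ _
    have habs : |x c - x b| = x c - x b := by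
      rw [abs_of_nonneg (by linarith)]
    rw [hAc] at h1
    rw [hAb] at h2
    rw [habs] at htri
    linarith
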